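/- For every integer d ≥ 3, the value k = 1 is frequency restrictive for d: there exists a vector of positive real numbers f(1), …, f(d) with f(1) + ⋯ + f(d) = 1 such that no 1-balanced sequence over the alphabet {1, …, d} has frequency vector (f(1), …, f(d)). Consequently BT(d) ≥ 2 for all d ≥ 3. -/

import Mathlib

open Finset Filter Topology

/-- Number of occurrences of the letter `c` in the factor of `u` of length `n`
starting at position `i`, i.e. `#{t : i ≤ t < i+n, u t = c}`. -/
def cnt {A : Type*} [DecidableEq A] (u : ℕ → A) (c : A) (i n : ℕ) : ℕ :=
  ((Finset.Ico i (i + n)).filter (fun t => u t = c)).card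

/-- A sequence `u` is `k`-balanced if the numbers of occurrences of any letter in
any two factors of the same length differ by at most `k`. -/
def IsBalanced {A : Type*} [DecidableEq A] (k : ℕ) (u : ℕ → A) : Prop :=
  ∀ i j n : ℕ, ∀ c : A, ((cnt u c i n : ℤ) - (cnt u c j n : ℤ)).natAbs ≤ k

/-- The letter `c` has frequency `f` in the sequence `u`. -/
def HasFreq {A : Type*} [DecidableEq A] (u : ℕ → A) (c : A) (f : ℝ) : Prop :=
  Tendsto (fun n : ℕ => (cnt u c 0 n : ℝ) / n) atTop (𝓝 f)


/-!
Give two letters the frequencies `1/2` and `1/3`. In a `1`-balanced sequence every factor of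
length `n` contains a letter of frequency `1/q` between `n/q - 1` and `n/q + 1` times. Two disjoint
factors of length `q` with no occurrence (or with two occurrences) would then leave too few (too
many) occurrences in the factor spanning both, so eventually every factor of length `q` contains
the letter exactly once, and the letter occupies a single residue class modulo `q`. By the Chinese
remainder theorem the classes of the two letters modulo `2` and `3` meet.
-/

section Counting

variable {A : Type*} [DecidableEq A] (u : ℕ → A) (c : A)

lemma cnt_add (i a b : ℕ) : cnt u c i (a + b) = cnt u c i a + cnt u c (i + a) b := by
  unfold cnt
  rw [← Nat.add_assoc, ← Finset.Ico_union_Ico_eq_Ico (b := i + a) (by omega) (by omega),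
    Finset.filter_union,
    Finset.card_union_of_disjoint
      (Finset.disjoint_filter_filter (Finset.Ico_disjoint_Ico_consecutive _ _ _))]

lemma cnt_add_add (i a b l : ℕ) :
    cnt u c i (a + b + l) = cnt u c i a + cnt u c (i + a) b + cnt u c (i + a + b) l := by
  rw [cnt_add, cnt_add, Nat.add_assoc i a b]

lemma cnt_one (i : ℕ) : cnt u c i 1 = if u i = c then 1 else 0 := by
  unfold cnt
  rw [Nat.Ico_succ_singleton, Finset.filter_singleton]
  split_ifs <;> rfl

lemma cnt_le (i n : ℕ) : cnt u c i n ≤ n :=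
  (Finset.card_filter_le _ _).trans (by simp)

lemma cnt_mono (i : ℕ) {m n : ℕ} (h : m ≤ n) : cnt u c i m ≤ cnt u c i n := by
  obtain ⟨k, rfl⟩ := Nat.exists_eq_add_of_le h
  rw [cnt_add]
  exact Nat.le_add_right _ _

/-- Both sides count the letter `c` in the factor of length `q + 1` at `n`. -/
lemma apply_add_eq_iff_of_cnt_eq {n q : ℕ} (h : cnt u c n q = cnt u c (n + 1) q) :
    u (n + q) = c ↔ u n = c := by
  have e : cnt u c n q + cnt u c (n + q) 1 = cnt u c n 1 + cnt u c (n + 1) q := by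
    rw [← cnt_add, ← cnt_add, Nat.add_comm]
  rw [h, cnt_one, cnt_one] at e
  split_ifs at e <;> simp_all

variable {u c}

lemma mul_cnt_lt_of_cnt_le_one {q : ℕ} (hq : 0 < q) (h : ∀ m, cnt u c m q ≤ 1) (L m : ℕ) :
    q * cnt u c m L < L + q := by
  induction L using Nat.strong_induction_on generalizing m with
  | _ L ih =>
    rcases lt_or_ge L q with hL | hL
    · have hle : cnt u c m L ≤ 1 := (cnt_mono u c m hL.le).trans (h m)
      have := cnt_le u c m L
      interval_cases cnt u c m L <;> omega
    · obtain ⟨L', rfl⟩ := Nat.exists_eq_add_of_le' hL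
      have := ih L' (by omega) m
      have := Nat.mul_le_mul_left q (h (m + L'))
      rw [cnt_add, Nat.mul_add]
      omega

lemma lt_mul_cnt_of_one_le_cnt {q : ℕ} (h : ∀ m, 1 ≤ cnt u c m q) (L m : ℕ) :
    L < q * cnt u c m L + q := by
  have hq : 0 < q := (h 0).trans (cnt_le u c 0 q)
  induction L using Nat.strong_induction_on generalizing m with
  | _ L ih =>
    rcases lt_or_ge L q with hL | hL
    · exact Nat.lt_add_left _ hL
    · obtain ⟨L', rfl⟩ := Nat.exists_eq_add_of_le' hL
      have := ih L' (by omega) m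
      have := Nat.mul_le_mul_left q (h (m + L'))
      rw [cnt_add, Nat.mul_add]
      omega

end Counting

namespace IsBalanced

variable {A : Type*} [DecidableEq A] {u : ℕ → A} {c : A}

lemma cnt_le_add {k : ℕ} (hb : IsBalanced k u) (i j n : ℕ) : cnt u c i n ≤ cnt u c j n + k := by
  have := hb i j n c
  omega

lemma abs_cnt_sub_cnt_le {k : ℕ} (hb : IsBalanced k u) (i j n : ℕ) :
    |(cnt u c i n : ℝ) - cnt u c j n| ≤ k := by
  have h : |(cnt u c i n : ℤ) - cnt u c j n| ≤ k := by
    rw [Int.abs_eq_natAbs]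
    exact_mod_cast hb i j n c
  exact_mod_cast h

/-- Cutting `[0, m n)` into `m` factors of length `n`, each within `k` of `cnt u c i n`,
and letting `m → ∞` shows that `n f` is within `k` of it as well. -/
lemma abs_cnt_sub_mul_le {k : ℕ} {f : ℝ} (hb : IsBalanced k u) (hf : HasFreq u c f)
    (i n : ℕ) : |(cnt u c i n : ℝ) - n * f| ≤ k := by
  rcases Nat.eq_zero_or_pos n with rfl | hn
  · simp [cnt]
  set C : ℝ := (cnt u c i n : ℝ)
  have blocks : ∀ m : ℕ, |(cnt u c 0 (m * n) : ℝ) - m * C| ≤ m * k := by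
    intro m
    induction m with
    | zero => simp [cnt]
    | succ m ih =>
      have hstep := hb.abs_cnt_sub_cnt_le (c := c) (m * n) i n
      rw [Nat.succ_mul, cnt_add, Nat.zero_add]
      push_cast
      calc _ = |((cnt u c 0 (m * n) : ℝ) - m * C) + ((cnt u c (m * n) n : ℝ) - C)| := by ring_nf
        _ ≤ _ := (abs_add_le _ _).trans (by linarith)
  have lim : Tendsto (fun m : ℕ => (cnt u c 0 (m * n) : ℝ) / m) atTop (𝓝 (n * f)) := by
    have hmn : Tendsto (fun m : ℕ => m * n) atTop atTop :=
      tendsto_atTop_mono (fun m => Nat.le_mul_of_pos_right m hn) tendsto_id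
    refine ((hf.comp hmn).const_mul (n : ℝ)).congr' ?_
    filter_upwards [eventually_gt_atTop 0] with m hm
    simp only [Function.comp_apply, Nat.cast_mul]
    field_simp
  have near : ∀ᶠ m : ℕ in atTop, |(cnt u c 0 (m * n) : ℝ) / m - C| ≤ k := by
    filter_upwards [eventually_gt_atTop 0] with m hm
    have hm' : (0 : ℝ) < m := Nat.cast_pos.mpr hm
    rw [← mul_le_mul_iff_of_pos_left hm', ← abs_of_pos hm', ← abs_mul, abs_of_pos hm']
    calc _ = |(cnt u c 0 (m * n) : ℝ) - m * C| := by congr 1; field_simp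
      _ ≤ _ := blocks m
  rw [abs_sub_comm]
  exact le_of_tendsto ((lim.sub_const C).abs) near

variable {q : ℕ}

lemma cnt_bounds_of_hasFreq_inv (hq : 0 < q) (hb : IsBalanced 1 u) (hf : HasFreq u c (q : ℝ)⁻¹)
    (i n : ℕ) :
    q * cnt u c i n ≤ n + q ∧ n ≤ q * cnt u c i n + q := by
  have h := hb.abs_cnt_sub_mul_le hf i n
  have hq0 : (0 : ℝ) < q := Nat.cast_pos.mpr hq
  have key : |(q * cnt u c i n : ℝ) - n| ≤ q := by
    calc _ = q * |(cnt u c i n : ℝ) - n * (q : ℝ)⁻¹| := by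
          rw [← abs_of_pos hq0, ← abs_mul, abs_of_pos hq0]; congr 1; field_simp
      _ ≤ q * 1 := by gcongr; exact_mod_cast h
      _ = q := mul_one _
  obtain ⟨h1, h2⟩ := abs_le.mp key
  constructor
  · exact_mod_cast (show (q * cnt u c i n : ℝ) ≤ n + q by linarith)
  · exact_mod_cast (show (n : ℝ) ≤ q * cnt u c i n + q by linarith)

lemma cnt_ne_zero_of_cnt_eq_zero (hq : 0 < q) (hb : IsBalanced 1 u) (hf : HasFreq u c (q : ℝ)⁻¹)
    {a b : ℕ} (ha : cnt u c a q = 0) (hab : a + q ≤ b) : cnt u c b q ≠ 0 := by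
  intro hb0
  obtain ⟨L, rfl⟩ := Nat.exists_eq_add_of_le hab
  have hsplit := cnt_add_add u c a q L q
  rw [ha, hb0, Nat.zero_add, Nat.add_zero] at hsplit
  have hlow := (hb.cnt_bounds_of_hasFreq_inv hq hf a (q + L + q)).2
  have hle : ∀ m, cnt u c m q ≤ 1 := fun m => (hb.cnt_le_add m a q).trans_eq (by rw [ha])
  have hmid := mul_cnt_lt_of_cnt_le_one hq hle L (a + q)
  rw [hsplit] at hlow
  omega

lemma cnt_lt_two_of_two_le_cnt (hb : IsBalanced 1 u) (hf : HasFreq u c (q : ℝ)⁻¹)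
    {a b : ℕ} (ha : 2 ≤ cnt u c a q) (hab : a + q ≤ b) : cnt u c b q < 2 := by
  have hq : 0 < q := by have := cnt_le u c a q; omega
  by_contra! hb2
  obtain ⟨L, rfl⟩ := Nat.exists_eq_add_of_le hab
  have hsplit := cnt_add_add u c a q L q
  have hup := (hb.cnt_bounds_of_hasFreq_inv hq hf a (q + L + q)).1
  have hone : ∀ m, 1 ≤ cnt u c m q := fun m => by
    have := hb.cnt_le_add (c := c) a m q
    omega
  have hmid := lt_mul_cnt_of_one_le_cnt hone L (a + q)
  have := Nat.mul_le_mul_left q ha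
  have := Nat.mul_le_mul_left q hb2
  rw [hsplit, Nat.mul_add, Nat.mul_add] at hup
  omega

lemma eventually_cnt_eq_one (hq : 0 < q) (hb : IsBalanced 1 u) (hf : HasFreq u c (q : ℝ)⁻¹) :
    ∃ N, ∀ n ≥ N, cnt u c n q = 1 := by
  by_cases h0 : ∃ a, cnt u c a q = 0
  · obtain ⟨a, ha⟩ := h0
    refine ⟨a + q, fun n hn => ?_⟩
    have := hb.cnt_ne_zero_of_cnt_eq_zero hq hf ha hn
    have := hb.cnt_le_add (c := c) n a q
    omega
  push Not at h0
  by_cases h2 : ∃ a, 2 ≤ cnt u c a q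
  · obtain ⟨a, ha⟩ := h2
    refine ⟨a + q, fun n hn => ?_⟩
    have := hb.cnt_lt_two_of_two_le_cnt hf ha hn
    have := h0 n
    omega
  push Not at h2
  exact ⟨0, fun n _ => by have := h0 n; have := h2 n; omega⟩

lemma exists_modEq_iff (hq : 0 < q) (hb : IsBalanced 1 u) (hf : HasFreq u c (q : ℝ)⁻¹) :
    ∃ N t, ∀ n ≥ N, (u n = c ↔ n ≡ t [MOD q]) := by
  obtain ⟨N, hN⟩ := hb.eventually_cnt_eq_one hq hf
  obtain ⟨t, ht⟩ := Finset.card_eq_one.mp (hN N le_rfl)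
  have window : ∀ n ∈ Finset.Ico N (N + q), (u n = c ↔ n = t) := fun n hn => by
    simpa [hn] using Finset.ext_iff.mp ht n
  have ht_mem : t ∈ Finset.Ico N (N + q) :=
    (Finset.mem_filter.mp (ht ▸ Finset.mem_singleton_self t)).1
  refine ⟨N, t, fun n hn => ?_⟩
  induction n using Nat.strong_induction_on with
  | _ n ih =>
    rcases lt_or_ge n (N + q) with hlt | hge
    · rw [window n (Finset.mem_Ico.mpr ⟨hn, hlt⟩)]
      refine ⟨fun h => h ▸ Nat.ModEq.refl n, fun h => h.eq_of_abs_lt ?_⟩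
      rw [Finset.mem_Ico] at ht_mem
      exact abs_sub_lt_iff.mpr ⟨by omega, by omega⟩
    · obtain ⟨m, rfl⟩ : ∃ m, n = m + q := ⟨n - q, by omega⟩
      rw [apply_add_eq_iff_of_cnt_eq u c ((hN m (by omega)).trans (hN (m + 1) (by omega)).symm),
        ih m (by omega) (by omega)]
      exact ⟨Nat.add_modEq_right.trans, Nat.add_modEq_right.symm.trans⟩

end IsBalanced

lemma not_isBalanced_one_of_hasFreq_inv {A : Type*} [DecidableEq A] {u : ℕ → A} {p q : ℕ}
    (hp : 0 < p) (hq : 0 < q) (hpq : p.Coprime q) {a b : A} (hab : a ≠ b)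
    (ha : HasFreq u a (p : ℝ)⁻¹) (hb : HasFreq u b (q : ℝ)⁻¹) : ¬ IsBalanced 1 u := by
  intro hbal
  obtain ⟨M, s, hs⟩ := hbal.exists_modEq_iff hp ha
  obtain ⟨N, t, ht⟩ := hbal.exists_modEq_iff hq hb
  obtain ⟨k, hks, hkt⟩ := Nat.chineseRemainder hpq s t
  have hn : M + N ≤ k + p * q * (M + N) :=
    (Nat.le_mul_of_pos_left _ (Nat.mul_pos hp hq)).trans (Nat.le_add_left _ _)
  have hnp : k + p * q * (M + N) ≡ s [MOD p] := by
    refine Nat.ModEq.trans ?_ hks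
    simp [Nat.ModEq, Nat.mul_assoc]
  have hnq : k + p * q * (M + N) ≡ t [MOD q] := by
    refine Nat.ModEq.trans ?_ hkt
    simp [Nat.ModEq, Nat.mul_comm p q, Nat.mul_assoc]
  exact hab (((hs _ (by omega)).mpr hnp).symm.trans ((ht _ (by omega)).mpr hnq))

/-- For every `d ≥ 3`, the value `k = 1` is frequency restrictive: there is a
positive vector `f` summing to `1` which is not the frequency vector of any
`1`-balanced sequence over a `d`-letter alphabet. Consequently `BT(d) ≥ 2`. -/
theorem one_is_frequency_restrictive (d : ℕ) (hd : 3 ≤ d) :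
    ∃ f : Fin d → ℝ, (∀ i, 0 < f i) ∧ ∑ i, f i = 1 ∧
      ¬ ∃ v : ℕ → Fin d, IsBalanced 1 v ∧ ∀ i, HasFreq v i (f i) := by
  obtain ⟨e, rfl⟩ : ∃ e, d = e + 3 := ⟨d - 3, by omega⟩
  refine ⟨fun i => if i.val = 0 then 2⁻¹ else if i.val = 1 then 3⁻¹ else (6 * (e + 1 : ℝ))⁻¹,
    fun i => by dsimp only; split_ifs <;> positivity, ?_, ?_⟩
  · simp only [Fin.sum_univ_succ, Fin.val_eq_zero_iff, Fin.succ_ne_zero, Fin.val_succ, ↓reduceIte,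
      Nat.add_eq_right, sum_const, card_univ, Fintype.card_fin, nsmul_eq_mul, Nat.cast_add,
      Nat.cast_one]
    field_simp
    ring
  · rintro ⟨v, hbal, hfreq⟩
    refine not_isBalanced_one_of_hasFreq_inv (p := 2) (q := 3) two_pos three_pos (by norm_num)
      (a := 0) (b := 1) (by simp) ?_ ?_ hbal
    · simpa using hfreq 0
    · simpa using hfreq 1
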